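/- arXiv:2006.14196 — 7 statements merged into one kernel-verified Lean document; each statement's English description precedes it below -/
import Mathlib

section
/- For any real numbers x > 1 and A > 0 and δ > 0, the quantity f_A^+(x) = (x^2+1)^2 (1 + e^{-Aδ})(1 - e^{-Aδx}) - 4x (1 - e^{-Aδ})(1 + e^{-Aδx}) is strictly positive. -/
/-- For real `x > 1`, `A > 0`, `δ > 0`, the quantity
`f_A^+(x) = (x²+1)² (1 + e^{-Aδ})(1 - e^{-Aδx}) - 4x (1 - e^{-Aδ})(1 + e^{-Aδx})`
is strictly positive. -/
theorem fAplus_pos (x A δ : ℝ) (hx : 1 < x) (hA : 0 < A) (hδ : 0 < δ) :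
    0 < (x ^ 2 + 1) ^ 2 * (1 + Real.exp (-(A * δ))) * (1 - Real.exp (-(A * δ * x)))
        - 4 * x * (1 - Real.exp (-(A * δ))) * (1 + Real.exp (-(A * δ * x))) := by
  set t := A * δ with ht
  have htpos : 0 < t := mul_pos hA hδ
  have h1 : Real.exp (-(t * x)) < Real.exp (-t) := by
    apply Real.exp_lt_exp.mpr
    nlinarith
  have h2 : 0 < Real.exp (-(t * x)) := Real.exp_pos _
  have h3 : Real.exp (-t) < 1 := by
    rw [Real.exp_lt_one_iff]; linarith
  have h4 : Real.exp (-(t * x)) < 1 := lt_trans h1 h3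
  have h5 : (4 : ℝ) * x < (x ^ 2 + 1) ^ 2 := by nlinarith [sq_nonneg (x - 1), sq_nonneg (x ^ 2 - 1)]
  have hf1 : 0 < (1 - Real.exp (-t)) * (1 + Real.exp (-(t * x))) := by nlinarith
  have hf2 : (1 - Real.exp (-t)) * (1 + Real.exp (-(t * x)))
      < (1 + Real.exp (-t)) * (1 - Real.exp (-(t * x))) := by nlinarith
  nlinarith [mul_pos (by linarith : (0:ℝ) < 4 * x) hf1]
end

section
/- For any real numbers x > 1 and A > 0 and δ > 0, the quantity f_A^-(x) = (x^2+1)^2 (1 - e^{-Aδ})(1 + e^{-Aδx}) - 4x (1 + e^{-Aδ})(1 - e^{-Aδx}) is strictly positive. -/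
/-!
Write `u = e^{-Aδ}`, `v = e^{-Aδx}`. Since `(x²+1)² = (x²-1)² + 4x²`, the quantity equals
`(x²-1)² (1-u)(1+v) + 4x (x(1-u)(1+v) - (1+u)(1-v))`, whose first term is positive. The bracket
is nonnegative: up to the positive factor `4 e^{-Aδ(1+x)/2}` it is
`x sinh s cosh(xs) - cosh s sinh(xs)` with `s = Aδ/2`, which vanishes at `s = 0` and has
derivative `(x²-1) sinh s sinh(xs) ≥ 0`.
-/

open Real Set

lemma hasDerivAt_mul_sinh_mul_cosh_sub_cosh_mul_sinh (x s : ℝ) :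
    HasDerivAt (fun t => x * sinh t * cosh (x * t) - cosh t * sinh (x * t))
      ((x ^ 2 - 1) * sinh s * sinh (x * s)) s := by
  have hxs : HasDerivAt (fun t => x * t) x s := by simpa using (hasDerivAt_id s).const_mul x
  refine (((hasDerivAt_sinh s).const_mul x).fun_mul hxs.cosh).fun_sub
    ((hasDerivAt_cosh s).fun_mul hxs.sinh) |>.congr_deriv ?_
  ring

lemma cosh_mul_sinh_mul_le (x s : ℝ) (hx : 1 ≤ x) (hs : 0 ≤ s) :
    cosh s * sinh (x * s) ≤ x * sinh s * cosh (x * s) := by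
  have hmono :
      MonotoneOn (fun t => x * sinh t * cosh (x * t) - cosh t * sinh (x * t)) (Ici 0) := by
    have hderiv := hasDerivAt_mul_sinh_mul_cosh_sub_cosh_mul_sinh x
    refine monotoneOn_of_hasDerivWithinAt_nonneg (convex_Ici 0)
      (fun t _ => (hderiv t).continuousAt.continuousWithinAt)
      (fun t _ => (hderiv t).hasDerivWithinAt) ?_
    rw [interior_Ici]
    intro t (ht : 0 < t)
    have : 0 ≤ x ^ 2 - 1 := by nlinarith
    have := sinh_nonneg_iff.2 ht.le
    have := sinh_nonneg_iff.2 (by positivity : 0 ≤ x * t)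
    positivity
  simpa using hmono self_mem_Ici hs hs

lemma one_add_exp_neg_two_mul (s : ℝ) : 1 + exp (-(2 * s)) = 2 * exp (-s) * cosh s := by
  rw [cosh_eq, show -(2 * s) = -s + -s by ring, exp_add]
  have h : exp (-s) * exp s = 1 := by rw [← exp_add]; simp
  linear_combination -h

lemma one_sub_exp_neg_two_mul (s : ℝ) : 1 - exp (-(2 * s)) = 2 * exp (-s) * sinh s := by
  rw [sinh_eq, show -(2 * s) = -s + -s by ring, exp_add]
  have h : exp (-s) * exp s = 1 := by rw [← exp_add]; simp
  linear_combination -h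

lemma one_add_exp_neg_mul_one_sub_exp_neg_mul_le (x a : ℝ) (hx : 1 ≤ x) (ha : 0 ≤ a) :
    (1 + exp (-a)) * (1 - exp (-(a * x))) ≤ x * ((1 - exp (-a)) * (1 + exp (-(a * x)))) := by
  obtain ⟨s, rfl⟩ : ∃ s, a = 2 * s := ⟨a / 2, by ring⟩
  rw [show 2 * s * x = 2 * (x * s) by ring, one_add_exp_neg_two_mul, one_sub_exp_neg_two_mul,
    one_add_exp_neg_two_mul, one_sub_exp_neg_two_mul]
  have := mul_le_mul_of_nonneg_left (cosh_mul_sinh_mul_le x s hx (by linarith))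
    (by positivity : 0 ≤ 4 * exp (-s) * exp (-(x * s)))
  linarith

/-- For real `x > 1`, `A > 0`, `δ > 0`, the quantity
`f_A^-(x) = (x²+1)² (1 - e^{-Aδ})(1 + e^{-Aδx}) - 4x (1 + e^{-Aδ})(1 - e^{-Aδx})`
is strictly positive. -/
theorem fAminus_pos (x A δ : ℝ) (hx : 1 < x) (hA : 0 < A) (hδ : 0 < δ) :
    0 < (x ^ 2 + 1) ^ 2 * (1 - Real.exp (-(A * δ))) * (1 + Real.exp (-(A * δ * x)))
        - 4 * x * (1 + Real.exp (-(A * δ))) * (1 - Real.exp (-(A * δ * x))) := by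
  set a := A * δ
  have ha : 0 < a := mul_pos hA hδ
  have hP : 0 < (1 - exp (-a)) * (1 + exp (-(a * x))) := by
    have := exp_lt_one_iff.2 (neg_lt_zero.2 ha)
    have := exp_pos (-(a * x))
    apply mul_pos <;> linarith
  have hx2 : 0 < (x ^ 2 - 1) ^ 2 := by
    have : 0 < x ^ 2 - 1 := by nlinarith
    positivity
  have hbracket := sub_nonneg.2 (one_add_exp_neg_mul_one_sub_exp_neg_mul_le x a hx.le ha.le)
  linarith [mul_pos hx2 hP, mul_nonneg (by linarith : 0 ≤ 4 * x) hbracket]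
end

section
/- For real A, δ, x with A > 0, δ > 0, x > 1, one has ∫_0^1 e^{-Aδ(1+x)t} dt > ∫_0^1 e^{-Aδ(1+(x-1)t)} dt. -/
/-!
Since `∫₀¹ e^{-(a + 2st)} dt = e^{-(a+s)} · sinh s / s`, with `c = Aδ`, `u = c(x-1)/2` and
`v = c(x+1)/2 = c + u` both integrals carry the factor `e^{-v}`, and the inequality becomes
`sinh u / u < sinh v / v`. This is the growth of the secant slopes through the origin of `sinh`,
which is strictly convex on `[0, ∞)`.
-/

open Real Set intervalIntegral

lemma strictConvexOn_sinh : StrictConvexOn ℝ (Ici 0) sinh :=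
  StrictMonoOn.strictConvexOn_of_deriv (convex_Ici 0) continuous_sinh.continuousOn <| by
    rw [Real.deriv_sinh, interior_Ici]
    exact cosh_strictMonoOn.mono Ioi_subset_Ici_self

lemma sinh_div_self_lt_sinh_div_self {u v : ℝ} (hu : 0 < u) (huv : u < v) :
    sinh u / u < sinh v / v := by
  simpa using strictConvexOn_sinh.secant_strict_mono self_mem_Ici hu.le (hu.trans huv).le
    hu.ne' (hu.trans huv).ne' huv

lemma integral_exp_neg_affine (a : ℝ) {s : ℝ} (hs : s ≠ 0) :
    ∫ t in (0 : ℝ)..1, exp (-(a + 2 * s * t)) = exp (-(a + s)) * (sinh s / s) := by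
  have hsplit : ∀ t, exp (-(a + 2 * s * t)) = exp (-a) * exp (-(2 * s) * t) := fun t => by
    rw [← exp_add]; ring_nf
  have h₁ : exp (-(a + s)) * exp s = exp (-a) := by rw [← exp_add]; ring_nf
  have h₂ : exp (-(a + s)) * exp (-s) = exp (-a) * exp (-(2 * s)) := by
    rw [← exp_add, ← exp_add]; ring_nf
  simp_rw [hsplit, integral_const_mul, integral_comp_mul_left (fun t => exp t)
    (neg_ne_zero.2 (mul_ne_zero two_ne_zero hs)), integral_exp, smul_eq_mul, mul_zero, exp_zero,
    sinh_eq]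
  field_simp
  linear_combination h₂ - h₁

/-- For `A > 0`, `δ > 0`, `x > 1`:
`∫_0^1 e^{-Aδ(1+x)t} dt > ∫_0^1 e^{-Aδ(1+(x-1)t)} dt`. -/
theorem integral_exp_layer_ineq (A δ x : ℝ) (hA : 0 < A) (hδ : 0 < δ) (hx : 1 < x) :
    (∫ t in (0:ℝ)..1, Real.exp (-(A * δ * (1 + (x - 1) * t))))
      < ∫ t in (0:ℝ)..1, Real.exp (-(A * δ * (1 + x) * t)) := by
  set c := A * δ
  set u := c * (x - 1) / 2
  set v := c * (x + 1) / 2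
  have hu : 0 < u := by have := mul_pos (mul_pos hA hδ) (sub_pos.2 hx); positivity
  have huv : u < v := by have := mul_pos hA hδ; simp only [u, v]; linarith
  have hR := integral_exp_neg_affine 0 (hu.trans huv).ne'
  simp only [zero_add] at hR
  calc (∫ t in (0:ℝ)..1, exp (-(c * (1 + (x - 1) * t))))
      = exp (-v) * (sinh u / u) := by
        rw [show v = c + u by ring, ← integral_exp_neg_affine c hu.ne']
        congr 1 with t; simp only [u]; ring_nf
    _ < exp (-v) * (sinh v / v) :=
        mul_lt_mul_of_pos_left (sinh_div_self_lt_sinh_div_self hu huv) (exp_pos _)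
    _ = ∫ t in (0:ℝ)..1, exp (-(c * (1 + x) * t)) := by
        rw [← hR]; congr 1 with t; simp only [v]; ring_nf
end

section
/- Let 0 < ε < π/2 and μ > 0. There exist constants c, C > 0 (depending only on ε, μ) such that for every complex λ ≠ 0 with |arg λ| ≤ π − ε and every A ≥ 0, the complex square root B = √(λ/μ + A²) with Re B > 0 satisfies c(|λ|^{1/2} + A) ≤ Re B ≤ |B| ≤ C(|λ|^{1/2} + A). -/
/-!
Put `w = λ/μ`, `z = w + A²` and `k = cos ε`. The principal root has `‖B‖ = √‖z‖` and
`Re B = √((‖z‖ + Re z)/2)`. The condition `|arg λ| ≤ π - ε` says `Re w ≥ -k‖w‖`; for `k ≥ 0`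
this sector is stable under adding `A² ≥ 0`, so `‖z‖ + Re z ≥ (1 - k)‖z‖`, while
`‖z‖ ≥ √((1 - k)/2) (‖w‖ + A²)`. Hence both `‖z‖` and `‖z‖ + Re z` are comparable to
`‖λ‖/μ + A²`, which is comparable to `(‖λ‖^{1/2} + A)²`.
-/

open Complex

namespace Complex

lemma neg_cos_mul_norm_le_re_of_abs_arg_le {w : ℂ} {ε : ℝ} (hε : 0 ≤ ε)
    (h : |w.arg| ≤ Real.pi - ε) : -(Real.cos ε * ‖w‖) ≤ w.re := by
  have hcos : Real.cos (Real.pi - ε) ≤ Real.cos |w.arg| :=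
    Real.cos_le_cos_of_nonneg_of_le_pi (abs_nonneg _) (by linarith) h
  rw [Real.cos_abs, Real.cos_pi_sub] at hcos
  rw [← norm_mul_cos_arg w]
  nlinarith [norm_nonneg w]

lemma norm_add_ofReal_sq (w : ℂ) (s : ℝ) : ‖w + s‖ ^ 2 = ‖w‖ ^ 2 + 2 * s * w.re + s ^ 2 := by
  rw [Complex.sq_norm, Complex.sq_norm, normSq_apply, normSq_apply]
  simp only [add_re, ofReal_re, add_im, ofReal_im, add_zero]
  ring

lemma neg_mul_norm_le_re_add_ofReal {k s : ℝ} {w : ℂ} (hk₀ : 0 ≤ k) (hk₁ : k ≤ 1)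
    (hw : -(k * ‖w‖) ≤ w.re) (hs : 0 ≤ s) : -(k * ‖w + s‖) ≤ (w + s).re := by
  rcases le_or_gt 0 (w + s).re with hre | hre
  · nlinarith [norm_nonneg (w + s)]
  · have hre' : w.re + s < 0 := by simpa using hre
    suffices (w.re + s) ^ 2 ≤ (k * ‖w + s‖) ^ 2 by
      simpa using abs_le_of_sq_le_sq' this (by positivity) |>.1
    -- shifting right shrinks `|Re|` and keeps `Im`; `Re² ≤ k² ‖·‖²` means `(1 - k²) Re² ≤ k² Im²`
    have hw2 : ‖w‖ ^ 2 = w.re ^ 2 + w.im ^ 2 := by rw [Complex.sq_norm, normSq_apply]; ring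
    have hws2 := norm_add_ofReal_sq w s
    have hre2 : w.re ^ 2 ≤ k ^ 2 * ‖w‖ ^ 2 := by nlinarith [norm_nonneg w]
    nlinarith [mul_le_mul_of_nonneg_left (show (w.re + s) ^ 2 ≤ w.re ^ 2 by nlinarith)
      (show 0 ≤ 1 - k ^ 2 by nlinarith)]

lemma sqrt_mul_add_le_norm_add_ofReal {k s : ℝ} {w : ℂ} (hk : -1 ≤ k)
    (hw : -(k * ‖w‖) ≤ w.re) (hs : 0 ≤ s) : √((1 - k) / 2) * (‖w‖ + s) ≤ ‖w + s‖ := by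
  have hws2 := norm_add_ofReal_sq w s
  rw [← Real.sqrt_sq (norm_nonneg (w + s)), ← Real.sqrt_sq (by positivity : 0 ≤ ‖w‖ + s),
    ← Real.sqrt_mul' _ (by positivity)]
  apply Real.sqrt_le_sqrt
  -- the difference of the two sides is `(1 + k) / 2 * (‖w‖ - s) ^ 2 + 2 * s * (w.re + k * ‖w‖)`
  nlinarith [mul_nonneg (by linarith : 0 ≤ 1 + k) (sq_nonneg (‖w‖ - s)),
    mul_nonneg hs (by linarith : 0 ≤ w.re + k * ‖w‖)]

lemma norm_cpow_inv_two (z : ℂ) : ‖z ^ (2⁻¹ : ℂ)‖ = √‖z‖ := by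
  rw [Real.sqrt_eq_rpow, ← norm_cpow_real]; norm_num

lemma sqrt_mul_sqrt_le_re_cpow_inv_two_add_ofReal {k s : ℝ} {w : ℂ} (hk₀ : 0 ≤ k) (hk₁ : k ≤ 1)
    (hw : -(k * ‖w‖) ≤ w.re) (hs : 0 ≤ s) :
    √((1 - k) * √((1 - k) / 2) / 2) * √(‖w‖ + s) ≤ ((w + s) ^ (2⁻¹ : ℂ)).re := by
  have hsector := neg_mul_norm_le_re_add_ofReal hk₀ hk₁ hw hs
  have hnorm := sqrt_mul_add_le_norm_add_ofReal (by linarith) hw hs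
  rw [cpow_inv_two_re, ← Real.sqrt_mul (by have := sub_nonneg.2 hk₁; positivity)]
  apply Real.sqrt_le_sqrt
  calc (1 - k) * √((1 - k) / 2) / 2 * (‖w‖ + s) = (1 - k) * (√((1 - k) / 2) * (‖w‖ + s)) / 2 := by
        ring
    _ ≤ (1 - k) * ‖w + s‖ / 2 := by gcongr
    _ ≤ (‖w + s‖ + (w + s).re) / 2 := by linarith

lemma norm_cpow_inv_two_add_ofReal_le (w : ℂ) {s : ℝ} (hs : 0 ≤ s) :
    ‖(w + s) ^ (2⁻¹ : ℂ)‖ ≤ √(‖w‖ + s) := by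
  rw [norm_cpow_inv_two]
  gcongr
  exact (norm_add_le _ _).trans_eq (by rw [norm_real, Real.norm_of_nonneg hs])

end Complex

lemma sqrt_min_mul_add_le_sqrt {t a y : ℝ} (ht : 0 ≤ t) (ha : 0 ≤ a) (hy : 0 ≤ y) :
    √(min t 1 / 2) * (√a + y) ≤ √(t * a + y ^ 2) := by
  have hm : 0 ≤ min t 1 := le_min ht zero_le_one
  rw [← Real.sqrt_sq (by positivity : 0 ≤ √a + y), ← Real.sqrt_mul (by positivity)]
  apply Real.sqrt_le_sqrt
  have h1 := min_le_left t 1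
  have h2 := min_le_right t 1
  have ha' := Real.sq_sqrt ha
  nlinarith [mul_nonneg hm (sq_nonneg (√a - y)), mul_nonneg (sub_nonneg.2 h1) ha,
    mul_nonneg (sub_nonneg.2 h2) (sq_nonneg y)]

lemma sqrt_mul_add_sq_le {t a y : ℝ} (ha : 0 ≤ a) (hy : 0 ≤ y) :
    √(t * a + y ^ 2) ≤ √(max t 1) * (√a + y) := by
  rw [← Real.sqrt_sq (by positivity : 0 ≤ √a + y), ← Real.sqrt_mul (by positivity)]
  apply Real.sqrt_le_sqrt
  have h1 := le_max_left t 1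
  have h2 := le_max_right t 1
  have ha' := Real.sq_sqrt ha
  nlinarith [mul_nonneg (sub_nonneg.2 h1) ha, mul_nonneg (sub_nonneg.2 h2) (sq_nonneg y),
    mul_nonneg (zero_le_one.trans h2) (mul_nonneg (Real.sqrt_nonneg a) hy)]

/-- Let `0 < ε < π/2`, `μ > 0`. There exist `c, C > 0` such that for every `λ ≠ 0` with
`|arg λ| ≤ π - ε` and every `A ≥ 0`, the principal square root `B = (λ/μ + A²)^{1/2}`
(which has `Re B > 0`) satisfies `c(|λ|^{1/2} + A) ≤ Re B ≤ |B| ≤ C(|λ|^{1/2} + A)`. -/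
theorem resolvent_root_two_sided_estimate (ε μ : ℝ) (hε : 0 < ε) (hε' : ε < Real.pi / 2)
    (hμ : 0 < μ) :
    ∃ c C : ℝ, 0 < c ∧ 0 < C ∧
      ∀ (l : ℂ) (A : ℝ), l ≠ 0 → |l.arg| ≤ Real.pi - ε → 0 ≤ A →
        ∀ B : ℂ, B = (l / (μ : ℂ) + (A : ℂ) ^ 2) ^ ((1 : ℂ) / 2) →
          c * (‖l‖ ^ ((1 : ℝ) / 2) + A) ≤ B.re ∧
          B.re ≤ ‖B‖ ∧
          ‖B‖ ≤ C * (‖l‖ ^ ((1 : ℝ) / 2) + A) := by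
  set k := Real.cos ε
  have hk₀ : 0 ≤ k := Real.cos_nonneg_of_mem_Icc ⟨by linarith, hε'.le⟩
  have hk₁ : k < 1 := by
    simpa using Real.cos_lt_cos_of_nonneg_of_le_pi le_rfl (by linarith [Real.pi_pos]) hε
  set κ := (1 - k) * √((1 - k) / 2) / 2
  have hκ : 0 < κ := by have := sub_pos.2 hk₁; positivity
  refine ⟨√κ * √(min μ⁻¹ 1 / 2), √(max μ⁻¹ 1), ?_, by positivity, ?_⟩
  · have : 0 < min μ⁻¹ 1 := lt_min (inv_pos.2 hμ) one_pos
    positivity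
  rintro l A - hl hA B rfl
  have hw : -(k * ‖l / (μ : ℂ)‖) ≤ (l / (μ : ℂ)).re := by
    refine neg_cos_mul_norm_le_re_of_abs_arg_le hε.le ?_
    rwa [div_eq_mul_inv, ← ofReal_inv, arg_mul_real (inv_pos.2 hμ)]
  have hnorm : ‖l / (μ : ℂ)‖ = μ⁻¹ * ‖l‖ := by simp [abs_of_pos hμ, div_eq_inv_mul]
  rw [← Real.sqrt_eq_rpow, one_div, show (A : ℂ) ^ 2 = ((A ^ 2 : ℝ) : ℂ) by push_cast; rfl]
  refine ⟨?_, re_le_norm _, ?_⟩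
  · calc √κ * √(min μ⁻¹ 1 / 2) * (√‖l‖ + A) ≤ √κ * √(‖l / (μ : ℂ)‖ + A ^ 2) := by
          rw [mul_assoc, hnorm]
          gcongr
          exact sqrt_min_mul_add_le_sqrt (inv_nonneg.2 hμ.le) (norm_nonneg l) hA
      _ ≤ _ := sqrt_mul_sqrt_le_re_cpow_inv_two_add_ofReal hk₀ hk₁.le hw (sq_nonneg A)
  · calc _ ≤ √(‖l / (μ : ℂ)‖ + A ^ 2) := norm_cpow_inv_two_add_ofReal_le _ (sq_nonneg A)
      _ ≤ _ := hnorm ▸ sqrt_mul_add_sq_le (norm_nonneg l) hA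
end

section
/- Let 0 < ε < π/2, μ > 0, and let B = √(μ^{-1}λ + A²) with Re B > 0 for λ in the sector Σ_{ε,0} = {λ ∈ ℂ \ {0} : |arg λ| ≤ π − ε} and A ≥ 0. Then D₃ := B³ + AB² + 3A²B − A³ satisfies c(|λ|^{1/2}+A)³ ≤ |D₃| ≤ C(|λ|^{1/2}+A)³ for constants c, C > 0 depending only on ε and μ. -/
/-!
Let `r ∈ (0, 1)` be the real root of `t³ + t² + 3t - 1` and `ω, ω̄` its complex roots, which
have negative real part. Then `D₃ = (B - rA)(B - ωA)(B - ω̄A)`. Since `Re B ≥ 0`, both factors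
`B - ωA`, `B - ω̄A` are bounded below by a multiple of `‖B‖ + A`. For the real factor,
`(B - rA)(B + rA) = μ⁻¹λ + (1 - r²)A²` lies in the sector, where `‖z + t‖ ≥ sin(ε/2)(‖z‖ + t)`
for `t ≥ 0`, and this again gives a multiple of `‖B‖ + A`. So `‖D₃‖ ≍ (‖B‖ + A)³`, and the
same sector estimate for `B² = μ⁻¹λ + A²` gives `‖B‖ ≍ ‖λ‖^{1/2} + A`.
-/

open Complex

lemma neg_cos_mul_norm_le_re {z : ℂ} {ε : ℝ} (hε : 0 ≤ ε) (hz : |z.arg| ≤ Real.pi - ε) :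
    -(Real.cos ε * ‖z‖) ≤ z.re := by
  have hcos : Real.cos (Real.pi - ε) ≤ Real.cos z.arg := by
    rw [← Real.cos_abs z.arg]
    exact Real.cos_le_cos_of_nonneg_of_le_pi (abs_nonneg _) (by linarith) hz
  rw [Real.cos_pi_sub] at hcos
  rw [← norm_mul_cos_arg]
  nlinarith [norm_nonneg z]

lemma sin_half_mul_le_norm_add_ofReal {z : ℂ} {ε t : ℝ} (hε : 0 ≤ ε)
    (hz : |z.arg| ≤ Real.pi - ε) (ht : 0 ≤ t) :
    Real.sin (ε / 2) * (‖z‖ + t) ≤ ‖z + t‖ := by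
  have hs : 0 ≤ Real.sin (ε / 2) :=
    Real.sin_nonneg_of_nonneg_of_le_pi (by linarith) (by linarith [abs_nonneg z.arg])
  have hs2 : Real.sin (ε / 2) ^ 2 = (1 - Real.cos ε) / 2 := by
    rw [Real.sin_sq_eq_half_sub, mul_div_cancel₀ _ two_ne_zero]; ring
  have hre := neg_cos_mul_norm_le_re hε hz
  have hnorm : ‖z + t‖ ^ 2 = ‖z‖ ^ 2 + 2 * t * z.re + t ^ 2 := by
    rw [Complex.sq_norm, Complex.sq_norm, normSq_apply, normSq_apply]; simp; ring
  refine le_of_pow_le_pow_left₀ two_ne_zero (norm_nonneg _) ?_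
  rw [mul_pow, hs2, hnorm]
  nlinarith [mul_le_mul_of_nonneg_left hre (by linarith : (0 : ℝ) ≤ 2 * t),
    mul_nonneg (by linarith [Real.neg_one_le_cos ε] : (0 : ℝ) ≤ 1 + Real.cos ε)
      (sq_nonneg (‖z‖ - t))]

lemma re_cpow_one_half_nonneg (w : ℂ) : 0 ≤ (w ^ ((1 : ℂ) / 2)).re := by
  rw [one_div, cpow_inv_two_re]
  exact Real.sqrt_nonneg _

lemma norm_sq_le_norm_add_sq {z B : ℂ} {A : ℝ} (hB : B ^ 2 = z + (A : ℂ) ^ 2) :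
    ‖B‖ ^ 2 ≤ ‖z‖ + A ^ 2 := by
  rw [← norm_pow, hB]
  refine (norm_add_le _ _).trans_eq ?_
  rw [norm_pow, norm_real, Real.norm_eq_abs, sq_abs]

lemma sin_half_mul_le_norm_sq {z B : ℂ} {ε A : ℝ} (hε : 0 ≤ ε) (hz : |z.arg| ≤ Real.pi - ε)
    (hB : B ^ 2 = z + (A : ℂ) ^ 2) :
    Real.sin (ε / 2) * (‖z‖ + A ^ 2) ≤ ‖B‖ ^ 2 := by
  rw [← norm_pow, hB]
  exact_mod_cast sin_half_mul_le_norm_add_ofReal hε hz (sq_nonneg A)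

lemma mul_le_norm_sub_mul_ofReal {B w : ℂ} {A : ℝ} (hB : 0 ≤ B.re) (hA : 0 ≤ A)
    (hw : w.re < 0) :
    -w.re / (-w.re + 1 + ‖w‖) * (‖B‖ + A) ≤ ‖B - w * A‖ := by
  have hre : -w.re * A ≤ ‖B - w * A‖ := by
    refine le_trans ?_ (re_le_norm _)
    simp only [sub_re, mul_re, ofReal_re, ofReal_im, mul_zero, sub_zero]
    linarith
  have hnorm : ‖B‖ - ‖w‖ * A ≤ ‖B - w * A‖ := by
    simpa [norm_mul, abs_of_nonneg hA] using norm_sub_norm_le B (w * A)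
  rw [div_mul_eq_mul_div, div_le_iff₀ (by linarith [norm_nonneg w])]
  nlinarith [mul_le_mul_of_nonneg_left hnorm (neg_nonneg.2 hw.le),
    mul_le_mul_of_nonneg_left hre (norm_nonneg w)]

lemma mul_le_norm_sub_ofReal_mul {z B : ℂ} {ε A r : ℝ} (hε : 0 ≤ ε)
    (hz : |z.arg| ≤ Real.pi - ε) (hA : 0 ≤ A) (hr₀ : 0 ≤ r) (hr₁ : r ≤ 1)
    (hB : B ^ 2 = z + (A : ℂ) ^ 2) :
    Real.sin (ε / 2) * (1 - r ^ 2) / 4 * (‖B‖ + A) ≤ ‖B - r * A‖ := by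
  have hs : 0 ≤ Real.sin (ε / 2) :=
    Real.sin_nonneg_of_nonneg_of_le_pi (by linarith) (by linarith [abs_nonneg z.arg])
  have hk : 0 ≤ 1 - r ^ 2 := by nlinarith
  have hprod : ‖B - r * A‖ * ‖B + r * A‖ = ‖z + ((1 - r ^ 2) * A ^ 2 : ℝ)‖ := by
    rw [← norm_mul]; congr 1; push_cast; linear_combination hB
  have hsector := sin_half_mul_le_norm_add_ofReal hε hz (mul_nonneg hk (sq_nonneg A))
  have hplus : ‖B + r * A‖ ≤ ‖B‖ + A := by
    refine (norm_add_le _ _).trans ?_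
    simp only [norm_mul, norm_real, Real.norm_eq_abs, abs_of_nonneg hr₀, abs_of_nonneg hA]
    nlinarith
  have hBsq := norm_sq_le_norm_add_sq hB
  rcases (add_nonneg (norm_nonneg B) hA).eq_or_lt with hX | hX
  · rw [← hX, mul_zero]; exact norm_nonneg _
  have hX4 : (‖B‖ + A) ^ 2 ≤ 4 * (‖z‖ + A ^ 2) := by
    nlinarith [(add_sq_le : (‖B‖ + A) ^ 2 ≤ _), norm_nonneg z]
  refine le_of_mul_le_mul_right ?_ hX
  calc Real.sin (ε / 2) * (1 - r ^ 2) / 4 * (‖B‖ + A) * (‖B‖ + A)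
      ≤ Real.sin (ε / 2) * ((1 - r ^ 2) * (‖z‖ + A ^ 2)) := by
        nlinarith [mul_le_mul_of_nonneg_left hX4 (mul_nonneg hs hk)]
    _ ≤ Real.sin (ε / 2) * (‖z‖ + (1 - r ^ 2) * A ^ 2) := by
        gcongr; nlinarith [norm_nonneg z]
    _ ≤ ‖B - r * A‖ * ‖B + r * A‖ := hprod ▸ hsector
    _ ≤ ‖B - r * A‖ * (‖B‖ + A) := by gcongr

lemma exists_cubic_root_mem_Icc :
    ∃ r ∈ Set.Icc (0 : ℝ) (1 / 2), r ^ 3 + r ^ 2 + 3 * r - 1 = 0 := by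
  have hcont : ContinuousOn (fun t : ℝ => t ^ 3 + t ^ 2 + 3 * t - 1) (Set.Icc 0 (1 / 2)) := by
    fun_prop
  exact intermediate_value_Icc (by norm_num) hcont (by norm_num)

lemma exists_D3_eq_mul_mul :
    ∃ (r : ℝ) (ω : ℂ), 0 ≤ r ∧ r < 1 ∧ ω.re < 0 ∧ ∀ B A : ℂ,
      B ^ 3 + A * B ^ 2 + 3 * A ^ 2 * B - A ^ 3
        = (B - r * A) * (B - ω * A) * (B - (starRingEnd ℂ) ω * A) := by
  obtain ⟨r, ⟨hr₀, hr₁⟩, hr⟩ := exists_cubic_root_mem_Icc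
  -- `ω, ω̄` are the roots of the quotient `t² + (1 + r) t + (3 + r + r²)`
  set ω : ℂ := ⟨-(1 + r) / 2, √(11 + 2 * r + 3 * r ^ 2) / 2⟩
  have hsum : ω + (starRingEnd ℂ) ω = -(1 + r) := by
    rw [add_conj]
    show ((2 * (-(1 + r) / 2) : ℝ) : ℂ) = _
    push_cast; ring
  have hprod : ω * (starRingEnd ℂ) ω = 3 + r + r ^ 2 := by
    have h : normSq ω = 3 + r + r ^ 2 := by
      rw [normSq_apply]
      show -(1 + r) / 2 * (-(1 + r) / 2)
          + √(11 + 2 * r + 3 * r ^ 2) / 2 * (√(11 + 2 * r + 3 * r ^ 2) / 2) = _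
      linear_combination
        Real.mul_self_sqrt (by nlinarith : (0 : ℝ) ≤ 11 + 2 * r + 3 * r ^ 2) / 4
    rw [mul_conj, h]; push_cast; ring
  have hrC : (r : ℂ) ^ 3 + (r : ℂ) ^ 2 + 3 * r - 1 = 0 := by exact_mod_cast hr
  refine ⟨r, ω, hr₀, by linarith, show -(1 + r) / 2 < 0 by linarith, fun B A => ?_⟩
  linear_combination (A * B ^ 2 - r * A ^ 2 * B) * hsum + (r * A ^ 3 - A ^ 2 * B) * hprod
    + A ^ 3 * hrC

lemma exists_mul_pow_three_le_norm_D3 {ε : ℝ} (hε : 0 < ε) (hε' : ε < Real.pi) :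
    ∃ c > 0, ∀ (z B : ℂ) (A : ℝ), |z.arg| ≤ Real.pi - ε → 0 ≤ A → 0 ≤ B.re →
      B ^ 2 = z + (A : ℂ) ^ 2 →
        c * (‖B‖ + A) ^ 3 ≤ ‖B ^ 3 + (A : ℂ) * B ^ 2 + 3 * (A : ℂ) ^ 2 * B - (A : ℂ) ^ 3‖ := by
  obtain ⟨r, ω, hr₀, hr₁, hω, hfac⟩ := exists_D3_eq_mul_mul
  have hs : 0 < Real.sin (ε / 2) := Real.sin_pos_of_pos_of_lt_pi (by linarith) (by linarith)
  have hk : 0 < 1 - r ^ 2 := by nlinarith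
  set c₁ := Real.sin (ε / 2) * (1 - r ^ 2) / 4
  set c₂ := -ω.re / (-ω.re + 1 + ‖ω‖)
  have hc₁ : 0 < c₁ := by positivity
  have hc₂ : 0 < c₂ := div_pos (by linarith) (by linarith [norm_nonneg ω])
  refine ⟨c₁ * c₂ * c₂, by positivity, fun z B A hz hA hBre hB => ?_⟩
  have hreal := mul_le_norm_sub_ofReal_mul hε.le hz hA hr₀ hr₁.le hB
  have hroot := mul_le_norm_sub_mul_ofReal hBre hA hω
  have hroot' : c₂ * (‖B‖ + A) ≤ ‖B - (starRingEnd ℂ) ω * A‖ := by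
    simpa using mul_le_norm_sub_mul_ofReal hBre hA (show ((starRingEnd ℂ) ω).re < 0 by simpa)
  rw [hfac, norm_mul, norm_mul]
  calc c₁ * c₂ * c₂ * (‖B‖ + A) ^ 3
      = (c₁ * (‖B‖ + A)) * (c₂ * (‖B‖ + A)) * (c₂ * (‖B‖ + A)) := by ring
    _ ≤ _ := by gcongr

lemma norm_D3_le {B : ℂ} {A : ℝ} (hA : 0 ≤ A) :
    ‖B ^ 3 + (A : ℂ) * B ^ 2 + 3 * (A : ℂ) ^ 2 * B - (A : ℂ) ^ 3‖ ≤ (‖B‖ + A) ^ 3 := by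
  calc _ ≤ ‖B ^ 3‖ + ‖(A : ℂ) * B ^ 2‖ + ‖3 * (A : ℂ) ^ 2 * B‖ + ‖(A : ℂ) ^ 3‖ :=
        (norm_sub_le _ _).trans (by gcongr; exact norm_add₃_le)
    _ = ‖B‖ ^ 3 + A * ‖B‖ ^ 2 + 3 * A ^ 2 * ‖B‖ + A ^ 3 := by
        simp only [norm_mul, norm_pow, norm_real, Real.norm_eq_abs, abs_of_nonneg hA,
          Complex.norm_ofNat]
    _ ≤ (‖B‖ + A) ^ 3 := by
        nlinarith [mul_nonneg hA (sq_nonneg ‖B‖)]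

lemma sqrt_mul_le_of_mul_sq_le {k x y : ℝ} (hx : 0 ≤ x) (hy : 0 ≤ y) (h : k * x ^ 2 ≤ y ^ 2) :
    √k * x ≤ y := by
  rw [← Real.sqrt_sq hx, ← Real.sqrt_mul' k (sq_nonneg x)]
  exact (Real.sqrt_le_left hy).2 h

lemma le_sqrt_mul_of_sq_le_mul_sq {k x y : ℝ} (hy : 0 ≤ y) (h : x ^ 2 ≤ k * y ^ 2) :
    x ≤ √k * y := by
  rw [← Real.sqrt_sq hy, ← Real.sqrt_mul' k (sq_nonneg y)]
  exact (le_abs_self x).trans (Real.abs_le_sqrt h)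

lemma arg_ofReal_inv_mul {μ : ℝ} (hμ : 0 < μ) (l : ℂ) : ((μ : ℂ)⁻¹ * l).arg = l.arg := by
  rw [← ofReal_inv]; exact arg_real_mul l (inv_pos.2 hμ)

lemma norm_ofReal_inv_mul {μ : ℝ} (hμ : 0 < μ) (l : ℂ) :
    ‖(μ : ℂ)⁻¹ * l‖ = μ⁻¹ * √‖l‖ ^ 2 := by
  rw [norm_mul, norm_inv, norm_real, Real.norm_of_nonneg hμ.le, Real.sq_sqrt (norm_nonneg l)]

section NormComparison

variable {ε μ A : ℝ} {l B : ℂ}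

lemma sqrt_mul_le_norm (hε : 0 ≤ ε) (hμ : 0 < μ) (hl : |l.arg| ≤ Real.pi - ε) (hA : 0 ≤ A)
    (hB : B ^ 2 = (μ : ℂ)⁻¹ * l + (A : ℂ) ^ 2) :
    √(Real.sin (ε / 2) * min μ⁻¹ 1 / 2) * (‖l‖ ^ (1 / 2 : ℝ) + A) ≤ ‖B‖ := by
  rw [← Real.sqrt_eq_rpow]
  have hsector := sin_half_mul_le_norm_sq hε (by rwa [arg_ofReal_inv_mul hμ]) hB
  rw [norm_ofReal_inv_mul hμ] at hsector
  have hs : 0 ≤ Real.sin (ε / 2) :=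
    Real.sin_nonneg_of_nonneg_of_le_pi (by linarith) (by linarith [abs_nonneg l.arg])
  refine sqrt_mul_le_of_mul_sq_le (by positivity) (norm_nonneg B) (hsector.trans' ?_)
  have hmin : min μ⁻¹ 1 * (√‖l‖ ^ 2 + A ^ 2) ≤ μ⁻¹ * √‖l‖ ^ 2 + A ^ 2 := by
    nlinarith [min_le_left μ⁻¹ 1, min_le_right μ⁻¹ 1, sq_nonneg √‖l‖, sq_nonneg A]
  nlinarith [mul_le_mul_of_nonneg_left hmin hs, (add_sq_le : (√‖l‖ + A) ^ 2 ≤ _),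
    mul_nonneg hs (le_min (inv_pos.2 hμ).le zero_le_one)]

lemma norm_le_sqrt_mul (hμ : 0 < μ) (hA : 0 ≤ A) (hB : B ^ 2 = (μ : ℂ)⁻¹ * l + (A : ℂ) ^ 2) :
    ‖B‖ ≤ √(max μ⁻¹ 1) * (‖l‖ ^ (1 / 2 : ℝ) + A) := by
  rw [← Real.sqrt_eq_rpow]
  have hnorm := norm_sq_le_norm_add_sq hB
  rw [norm_ofReal_inv_mul hμ] at hnorm
  refine le_sqrt_mul_of_sq_le_mul_sq (by positivity) (hnorm.trans ?_)
  nlinarith [le_max_left μ⁻¹ 1, le_max_right μ⁻¹ 1, sq_nonneg √‖l‖, sq_nonneg A,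
    mul_nonneg (Real.sqrt_nonneg ‖l‖) hA]

end NormComparison

/-- Let `0 < ε < π/2`, `μ > 0`, and for `λ` in the sector `Σ_{ε,0}` and `A ≥ 0` let
`B = (μ⁻¹λ + A²)^{1/2}` with `Re B > 0` (principal square root).  Then
`D₃ = B³ + AB² + 3A²B − A³` satisfies
`c(|λ|^{1/2}+A)³ ≤ |D₃| ≤ C(|λ|^{1/2}+A)³` for constants `c, C > 0` depending only
on `ε` and `μ`. -/
theorem D3_two_sided_estimate (ε μ : ℝ) (hε : 0 < ε) (hε' : ε < Real.pi / 2) (hμ : 0 < μ) :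
    ∃ c C : ℝ, 0 < c ∧ 0 < C ∧
      ∀ (l : ℂ) (A : ℝ), l ≠ 0 → |l.arg| ≤ Real.pi - ε → 0 ≤ A →
        ∀ B : ℂ, B = ((μ : ℂ)⁻¹ * l + (A : ℂ) ^ 2) ^ ((1 : ℂ) / 2) →
          c * (‖l‖ ^ ((1 : ℝ) / 2) + A) ^ 3
              ≤ ‖B ^ 3 + (A : ℂ) * B ^ 2 + 3 * (A : ℂ) ^ 2 * B - (A : ℂ) ^ 3‖ ∧
          ‖B ^ 3 + (A : ℂ) * B ^ 2 + 3 * (A : ℂ) ^ 2 * B - (A : ℂ) ^ 3‖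
              ≤ C * (‖l‖ ^ ((1 : ℝ) / 2) + A) ^ 3 := by
  obtain ⟨c₀, hc₀, hD3⟩ := exists_mul_pow_three_le_norm_D3 hε (by linarith [Real.pi_pos])
  have hs : 0 < Real.sin (ε / 2) := Real.sin_pos_of_pos_of_lt_pi (by linarith) (by linarith)
  have hcB : 0 < √(Real.sin (ε / 2) * min μ⁻¹ 1 / 2) :=
    Real.sqrt_pos.2 (by have := lt_min (inv_pos.2 hμ) one_pos; positivity)
  refine ⟨c₀ * √(Real.sin (ε / 2) * min μ⁻¹ 1 / 2) ^ 3, (√(max μ⁻¹ 1) + 1) ^ 3,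
    by positivity, by positivity, fun l A _ hl hA B hB => ?_⟩
  have hBsq : B ^ 2 = (μ : ℂ)⁻¹ * l + (A : ℂ) ^ 2 := by rw [hB, one_div, cpow_ofNat_inv_pow]
  constructor
  · calc _ = c₀ * (√(Real.sin (ε / 2) * min μ⁻¹ 1 / 2) * (‖l‖ ^ ((1 : ℝ) / 2) + A)) ^ 3 := by
          ring
      _ ≤ c₀ * (‖B‖ + A) ^ 3 := by
          gcongr
          exact (sqrt_mul_le_norm hε.le hμ hl hA hBsq).trans (le_add_of_nonneg_right hA)
      _ ≤ _ := hD3 _ B A (by rwa [arg_ofReal_inv_mul hμ]) hA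
          (hB ▸ re_cpow_one_half_nonneg _) hBsq
  · calc _ ≤ (‖B‖ + A) ^ 3 := norm_D3_le hA
      _ ≤ ((√(max μ⁻¹ 1) + 1) * (‖l‖ ^ ((1 : ℝ) / 2) + A)) ^ 3 := by
          gcongr
          nlinarith [norm_le_sqrt_mul hμ hA hBsq, Real.rpow_nonneg (norm_nonneg l) (1 / 2)]
      _ = _ := by ring
end

section
/- Let δ > 0, Ω = ℝ^{N-1} × (0, δ), and 1 < q < ∞. Suppose for each parameter λ in a set Λ and each pair (x_N, y_N) ∈ (0,δ)² an operator K₀(λ; x_N, y_N) on L_q(ℝ^{N-1}) is given, and the family {K₀(λ; x_N, y_N) : λ ∈ Λ, x_N, y_N ∈ (0,δ)} is R-bounded on L(L_q(ℝ^{N-1})) with R-bound M. Define K(λ)h(x', x_N) = ∫_0^δ (K₀(λ; x_N, y_N) h(·, y_N))(x') dy_N for h ∈ L_q(Ω). Then {K(λ) : λ ∈ Λ} is R-bounded on L(L_q(Ω)) with R-bound at most δ·M (up to a constant depending only on q). -/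
/-!
For almost every `x_N`, the randomized sum of the `K(λ_j) h_j` evaluated at `x_N` is a
randomized sum of Bochner integrals over `y_N`. Hölder's inequality on the interval of length
`δ` bounds its `q`-th moment by `δ^{q-1}` times the integral over `y_N` of the `q`-th moment of
the fiber sums `∑ ± K₀(λ_j; x_N, y_N) h_j(y_N)`, to which the fiber R-bound `M` applies for each
`y_N`. Integrating over `x_N` contributes another factor `δ`, so `C_q = 1` works.
-/

open MeasureTheory
open scoped ENNReal

/-- The sign `±1` attached to a Boolean. -/
def rsign (b : Bool) : ℝ := if b then 1 else -1

/-- R-boundedness of a family of operators with exponent `p` and constant `C`,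
the randomized expectation written as a sum over all sign patterns. -/
def IsRBoundedWith {X Y : Type*} [NormedAddCommGroup X] [NormedSpace ℝ X]
    [NormedAddCommGroup Y] [NormedSpace ℝ Y]
    (𝒯 : Set (X →L[ℝ] Y)) (p C : ℝ) : Prop :=
  ∀ (m : ℕ) (T : Fin m → (X →L[ℝ] Y)), (∀ j, T j ∈ 𝒯) →
    ∀ x : Fin m → X,
      ∑ ε : Fin m → Bool, ‖∑ j, rsign (ε j) • (T j) (x j)‖ ^ p
        ≤ C ^ p * ∑ ε : Fin m → Bool, ‖∑ j, rsign (ε j) • x j‖ ^ p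

open Set

lemma rsign_not (b : Bool) : rsign (!b) = -rsign b := by cases b <;> simp [rsign]

theorem sum_rpow_norm_finset_sum_rsign_smul_le {ι E : Type*} [Fintype ι] [DecidableEq ι]
    [NormedAddCommGroup E] [NormedSpace ℝ E] {p : ℝ} (hp : 1 ≤ p) (J : Finset ι) (v : ι → E) :
    ∑ ε : ι → Bool, ‖∑ j ∈ J, rsign (ε j) • v j‖ ^ p
      ≤ ∑ ε : ι → Bool, ‖∑ j, rsign (ε j) • v j‖ ^ p := by
  let S : (ι → Bool) → ℝ := fun ε => ‖∑ j, rsign (ε j) • v j‖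
  -- flipping the signs outside `J` averages the full sum to the partial one
  let Φ : (ι → Bool) → (ι → Bool) := fun ε j => if j ∈ J then ε j else !ε j
  have hΦ : Function.Involutive Φ := fun ε => by
    funext j; by_cases hj : j ∈ J <;> simp [Φ, hj]
  have hmid : ∀ ε, ∑ j ∈ J, rsign (ε j) • v j
      = (2⁻¹ : ℝ) • (∑ j, rsign (ε j) • v j + ∑ j, rsign (Φ ε j) • v j) := by
    intro ε
    rw [← Finset.sum_add_distrib, Finset.smul_sum,
      ← Finset.sum_subset (Finset.subset_univ J) fun j _ hj => by simp [Φ, hj, rsign_not]]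
    refine Finset.sum_congr rfl fun j hj => ?_
    simp only [Φ, hj, if_true, ← add_smul, smul_smul]
    congr 1
    ring
  have hpoint : ∀ ε, ‖∑ j ∈ J, rsign (ε j) • v j‖ ^ p ≤ 2⁻¹ * S ε ^ p + 2⁻¹ * S (Φ ε) ^ p := by
    intro ε
    calc ‖∑ j ∈ J, rsign (ε j) • v j‖ ^ p ≤ (2⁻¹ * S ε + 2⁻¹ * S (Φ ε)) ^ p := by
          gcongr
          rw [hmid, norm_smul, ← mul_add]
          gcongr
          · norm_num
          · exact norm_add_le _ _
      _ ≤ 2⁻¹ * S ε ^ p + 2⁻¹ * S (Φ ε) ^ p :=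
          (convexOn_rpow hp).2 (norm_nonneg _) (norm_nonneg _) (by norm_num) (by norm_num)
            (by norm_num)
  have hflip : ∑ ε, S (Φ ε) ^ p = ∑ ε, S ε ^ p :=
    Fintype.sum_bijective Φ hΦ.bijective _ _ fun ε => rfl
  calc ∑ ε : ι → Bool, ‖∑ j ∈ J, rsign (ε j) • v j‖ ^ p
      ≤ ∑ ε, (2⁻¹ * S ε ^ p + 2⁻¹ * S (Φ ε) ^ p) := Finset.sum_le_sum fun ε _ => hpoint ε
    _ = ∑ ε, S ε ^ p := by
      rw [Finset.sum_add_distrib, ← Finset.mul_sum, ← Finset.mul_sum, hflip]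
      ring

theorem sum_enorm_rpow_eq_ofReal {ι E : Type*} [Fintype ι] [NormedAddCommGroup E] {p : ℝ}
    (hp : 0 ≤ p) (w : ι → E) :
    ∑ i, ‖w i‖ₑ ^ p = ENNReal.ofReal (∑ i, ‖w i‖ ^ p) := by
  rw [ENNReal.ofReal_sum_of_nonneg fun i _ => by positivity]
  simp_rw [← ofReal_norm, ENNReal.ofReal_rpow_of_nonneg (norm_nonneg _) hp]

theorem sum_rpow_norm_le_iff_enorm {ι E F : Type*} [Fintype ι] [NormedAddCommGroup E]
    [NormedAddCommGroup F] {p C : ℝ} (hp : 0 ≤ p) (hC : 0 ≤ C) (u : ι → E) (v : ι → F) :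
    ∑ i, ‖u i‖ ^ p ≤ C ^ p * ∑ i, ‖v i‖ ^ p
      ↔ ∑ i, ‖u i‖ₑ ^ p ≤ ENNReal.ofReal C ^ p * ∑ i, ‖v i‖ₑ ^ p := by
  rw [sum_enorm_rpow_eq_ofReal hp, sum_enorm_rpow_eq_ofReal hp,
    ENNReal.ofReal_rpow_of_nonneg hC hp, ← ENNReal.ofReal_mul (by positivity),
    ENNReal.ofReal_le_ofReal_iff (by positivity)]

theorem isRBoundedWith_iff_enorm {X Y : Type*} [NormedAddCommGroup X] [NormedSpace ℝ X]
    [NormedAddCommGroup Y] [NormedSpace ℝ Y] {𝒯 : Set (X →L[ℝ] Y)} {p C : ℝ}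
    (hp : 0 ≤ p) (hC : 0 ≤ C) :
    IsRBoundedWith 𝒯 p C ↔ ∀ (m : ℕ) (T : Fin m → (X →L[ℝ] Y)), (∀ j, T j ∈ 𝒯) →
      ∀ x : Fin m → X,
        ∑ ε : Fin m → Bool, ‖∑ j, rsign (ε j) • (T j) (x j)‖ₑ ^ p
          ≤ ENNReal.ofReal C ^ p * ∑ ε : Fin m → Bool, ‖∑ j, rsign (ε j) • x j‖ₑ ^ p := by
  simp only [IsRBoundedWith, sum_rpow_norm_le_iff_enorm hp hC]

theorem enorm_integral_rpow_le {α E : Type*} [MeasurableSpace α] {μ : Measure α}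
    [NormedAddCommGroup E] [NormedSpace ℝ E] {p : ℝ} (hp : 1 ≤ p) {f : α → E}
    (hf : AEStronglyMeasurable f μ) :
    ‖∫ y, f y ∂μ‖ₑ ^ p ≤ μ univ ^ (p - 1) * ∫⁻ y, ‖f y‖ₑ ^ p ∂μ := by
  have hp0 : 0 < p := one_pos.trans_le hp
  have hHolder : ‖∫ y, f y ∂μ‖ₑ ≤ eLpNorm' f p μ * μ univ ^ (1 - 1 / p) := by
    refine (enorm_integral_le_lintegral_enorm f).trans ?_
    simpa [eLpNorm'_eq_lintegral_enorm] using
      eLpNorm'_le_eLpNorm'_mul_rpow_measure_univ one_pos hp hf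
  calc ‖∫ y, f y ∂μ‖ₑ ^ p ≤ (eLpNorm' f p μ * μ univ ^ (1 - 1 / p)) ^ p := by gcongr
    _ = μ univ ^ (p - 1) * ∫⁻ y, ‖f y‖ₑ ^ p ∂μ := by
      rw [ENNReal.mul_rpow_of_nonneg _ _ hp0.le, ← ENNReal.rpow_mul,
        ← lintegral_rpow_enorm_eq_rpow_eLpNorm' hp0, mul_comm]
      congr 2
      field_simp

theorem sum_enorm_rsign_integral_rpow_le {α X Y : Type*} [MeasurableSpace α] {μ : Measure α}
    [NormedAddCommGroup X] [NormedSpace ℝ X] [NormedAddCommGroup Y] [NormedSpace ℝ Y]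
    {p : ℝ} (hp : 1 ≤ p) {𝒯 : Set (X →L[ℝ] Y)} {M : ℝ} (hM : 0 ≤ M)
    (h𝒯 : IsRBoundedWith 𝒯 p M) {m : ℕ} (S : Fin m → α → X →L[ℝ] Y)
    (hS : ∀ᵐ y ∂μ, ∀ j, S j y ∈ 𝒯) (u : Fin m → α → X) :
    ∑ ε : Fin m → Bool, ‖∑ j, rsign (ε j) • ∫ y, S j y (u j y) ∂μ‖ₑ ^ p
      ≤ μ univ ^ (p - 1) * ENNReal.ofReal M ^ p
        * ∫⁻ y, ∑ ε : Fin m → Bool, ‖∑ j, rsign (ε j) • u j y‖ₑ ^ p ∂μ := by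
  classical
  have hp0 : 0 ≤ p := zero_le_one.trans hp
  -- the Bochner integral of a non-integrable fiber is `0`: only the integrable fibers
  -- `j ∈ J` contribute, and dropping the others from a randomized sum only decreases it
  let P : Fin m → Prop := fun j => Integrable (fun y => S j y (u j y)) μ
  let J : Finset (Fin m) := Finset.univ.filter P
  let F : (Fin m → Bool) → α → Y := fun ε y => ∑ j ∈ J, rsign (ε j) • S j y (u j y)
  have hF : ∀ ε, Integrable (F ε) μ := fun ε =>
    integrable_finsetSum _ fun j hj => ((Finset.mem_filter.1 hj).2).smul _
  have hsum : ∀ ε, ∑ j, rsign (ε j) • ∫ y, S j y (u j y) ∂μ = ∫ y, F ε y ∂μ := by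
    intro ε
    rw [integral_finsetSum _ fun j hj => ((Finset.mem_filter.1 hj).2).smul _,
      Finset.sum_filter]
    refine Finset.sum_congr rfl fun j _ => ?_
    split_ifs with hj
    · exact (integral_smul _ _).symm
    · rw [integral_undef hj, smul_zero]
  have hfiber : ∀ᵐ y ∂μ, ∑ ε : Fin m → Bool, ‖F ε y‖ₑ ^ p
      ≤ ENNReal.ofReal M ^ p * ∑ ε : Fin m → Bool, ‖∑ j, rsign (ε j) • u j y‖ₑ ^ p := by
    filter_upwards [hS] with y hy
    rw [← sum_rpow_norm_le_iff_enorm hp0 hM]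
    have hR := h𝒯 m (fun j => S j y) hy fun j => if P j then u j y else 0
    simp only [apply_ite (S _ y), map_zero, smul_ite, smul_zero, ← Finset.sum_filter] at hR
    exact hR.trans (mul_le_mul_of_nonneg_left
      (sum_rpow_norm_finset_sum_rsign_smul_le hp J _) (by positivity))
  calc ∑ ε : Fin m → Bool, ‖∑ j, rsign (ε j) • ∫ y, S j y (u j y) ∂μ‖ₑ ^ p
      ≤ ∑ ε : Fin m → Bool, μ univ ^ (p - 1) * ∫⁻ y, ‖F ε y‖ₑ ^ p ∂μ := by
        simp only [hsum]
        exact Finset.sum_le_sum fun ε _ => enorm_integral_rpow_le hp (hF ε).1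
    _ = μ univ ^ (p - 1) * ∫⁻ y, ∑ ε : Fin m → Bool, ‖F ε y‖ₑ ^ p ∂μ := by
        rw [← Finset.mul_sum, lintegral_finsetSum' _ fun ε _ =>
          (hF ε).1.enorm.pow_const p]
    _ ≤ μ univ ^ (p - 1) * ∫⁻ y, ENNReal.ofReal M ^ p
          * ∑ ε : Fin m → Bool, ‖∑ j, rsign (ε j) • u j y‖ₑ ^ p ∂μ := by
        gcongr _ * ?_
        exact lintegral_mono_ae hfiber
    _ = _ := by
        rw [lintegral_const_mul' _ _ (by finiteness), mul_assoc]

theorem Lp.sum_enorm_rpow_eq_lintegral {α E ι : Type*} [MeasurableSpace α] {μ : Measure α}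
    [NormedAddCommGroup E] [Fintype ι] {q : ℝ≥0∞} (hq0 : q ≠ 0) (hq : q ≠ ⊤)
    (f : ι → Lp E q μ) :
    ∑ i, ‖f i‖ₑ ^ q.toReal = ∫⁻ x, ∑ i, ‖f i x‖ₑ ^ q.toReal ∂μ := by
  rw [lintegral_finsetSum' _ fun i _ => (Lp.aestronglyMeasurable (f i)).enorm.pow_const _]
  refine Finset.sum_congr rfl fun i _ => ?_
  rw [Lp.enorm_def, eLpNorm_eq_eLpNorm' hq0 hq,
    lintegral_rpow_enorm_eq_rpow_eLpNorm' (ENNReal.toReal_pos hq0 hq)]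

theorem Lp.coeFn_sum_smul {α E ι : Type*} [MeasurableSpace α] {μ : Measure α}
    [NormedAddCommGroup E] [NormedSpace ℝ E] [Fintype ι] {q : ℝ≥0∞} (c : ι → ℝ)
    (f : ι → Lp E q μ) :
    ⇑(∑ i, c i • f i) =ᵐ[μ] fun x => ∑ i, c i • f i x := by
  filter_upwards [Lp.coeFn_fun_finsetSum Finset.univ (fun i => c i • f i),
    ae_all_iff.2 fun i => Lp.coeFn_smul (c i) (f i)] with x hsum hsmul
  simp only [hsum, hsmul, Pi.smul_apply]

theorem isRBoundedWith_of_integral_kernel {α E Λ : Type*} [MeasurableSpace α]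
    {μ : Measure α} [IsFiniteMeasure μ] {q : ℝ≥0∞} [Fact (1 ≤ q)] (hq : q ≠ ⊤)
    [NormedAddCommGroup E] [NormedSpace ℝ E] {𝒯 : Set (E →L[ℝ] E)} {M : ℝ} (hM : 0 ≤ M)
    (h𝒯 : IsRBoundedWith 𝒯 q.toReal M) (K₀ : Λ → α → α → E →L[ℝ] E)
    (hK₀ : ∀ᵐ x ∂μ, ∀ᵐ y ∂μ, ∀ l, K₀ l x y ∈ 𝒯) (K : Λ → Lp E q μ →L[ℝ] Lp E q μ)
    (hK : ∀ l h, ∀ᵐ x ∂μ, K l h x = ∫ y, K₀ l x y (h y) ∂μ) :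
    IsRBoundedWith {T | ∃ l, T = K l} q.toReal ((μ univ).toReal * M) := by
  have hq0 : q ≠ 0 := (zero_lt_one.trans_le Fact.out).ne'
  rw [isRBoundedWith_iff_enorm (by positivity) (by positivity)]
  intro m T hT h
  choose l hl using hT
  simp only [hl]
  rw [Lp.sum_enorm_rpow_eq_lintegral hq0 hq, Lp.sum_enorm_rpow_eq_lintegral hq0 hq]
  set p := q.toReal
  have hp : 1 ≤ p := ENNReal.toReal_one ▸ ENNReal.toReal_mono hq Fact.out
  set W := ∫⁻ y, ∑ ε : Fin m → Bool, ‖∑ j, rsign (ε j) • h j y‖ₑ ^ p ∂μ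
  have hW : ∫⁻ y, ∑ ε : Fin m → Bool, ‖(∑ j, rsign (ε j) • h j) y‖ₑ ^ p ∂μ = W :=
    lintegral_congr_ae <| by
      filter_upwards [ae_all_iff.2 fun ε : Fin m → Bool =>
        Lp.coeFn_sum_smul (fun j => rsign (ε j)) h] with y hy
      simp only [hy]
  have hpoint : ∀ᵐ x ∂μ, ∑ ε : Fin m → Bool, ‖(∑ j, rsign (ε j) • K (l j) (h j)) x‖ₑ ^ p
      ≤ μ univ ^ (p - 1) * ENNReal.ofReal M ^ p * W := by
    filter_upwards [ae_all_iff.2 fun ε : Fin m → Bool =>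
        Lp.coeFn_sum_smul (fun j => rsign (ε j)) fun j => K (l j) (h j),
      ae_all_iff.2 fun j => hK (l j) (h j), hK₀] with x hsum hKx hK₀x
    simp only [hsum, hKx]
    exact sum_enorm_rsign_integral_rpow_le hp hM h𝒯 (fun j => K₀ (l j) x)
      (hK₀x.mono fun y hy j => hy (l j)) fun j => h j
  rw [hW]
  have hμ : μ univ ^ (p - 1) * μ univ = μ univ ^ p := by
    conv_rhs => rw [← sub_add_cancel p 1,
      ENNReal.rpow_add_of_nonneg _ _ (by linarith) zero_le_one, ENNReal.rpow_one]
  calc ∫⁻ x, ∑ ε : Fin m → Bool, ‖(∑ j, rsign (ε j) • K (l j) (h j)) x‖ₑ ^ p ∂μ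
      ≤ ∫⁻ _, μ univ ^ (p - 1) * ENNReal.ofReal M ^ p * W ∂μ := lintegral_mono_ae hpoint
    _ = ENNReal.ofReal ((μ univ).toReal * M) ^ p * W := by
      rw [lintegral_const, ENNReal.ofReal_mul ENNReal.toReal_nonneg,
        ENNReal.ofReal_toReal (measure_ne_top μ univ),
        ENNReal.mul_rpow_of_nonneg _ _ (by positivity), ← hμ]
      ring

theorem isRBounded_of_fiberwise_kernel_general (q : ℝ≥0∞) [Fact (1 ≤ q)] (hq' : q ≠ ⊤) :
    ∃ Cq : ℝ, 0 < Cq ∧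
      ∀ (δ : ℝ), 0 < δ →
      ∀ (E : Type) [NormedAddCommGroup E] [NormedSpace ℝ E] [CompleteSpace E]
        (Λ : Type) (K₀ : Λ → ℝ → ℝ → (E →L[ℝ] E)) (M : ℝ), 0 ≤ M →
        IsRBoundedWith {T | ∃ (l : Λ) (x y : ℝ), x ∈ Set.Ioo 0 δ ∧ y ∈ Set.Ioo 0 δ ∧
            T = K₀ l x y} q.toReal M →
        ∀ K : Λ → (Lp E q (volume.restrict (Set.Ioo (0:ℝ) δ)) →L[ℝ]
                    Lp E q (volume.restrict (Set.Ioo (0:ℝ) δ))),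
          (∀ (l : Λ) (h : Lp E q (volume.restrict (Set.Ioo (0:ℝ) δ))),
            ∀ᵐ x ∂(volume.restrict (Set.Ioo (0:ℝ) δ)),
              (K l h) x = ∫ y in Set.Ioo (0:ℝ) δ, K₀ l x y (h y)) →
          IsRBoundedWith {T | ∃ l : Λ, T = K l} q.toReal (Cq * δ * M) := by
  refine ⟨1, one_pos, fun δ hδ E _ _ _ Λ K₀ M hM hRB K hK => ?_⟩
  have hmem : ∀ᵐ x ∂(volume.restrict (Ioo (0:ℝ) δ)), x ∈ Ioo 0 δ :=
    ae_restrict_mem measurableSet_Ioo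
  have hK₀ : ∀ᵐ x ∂(volume.restrict (Ioo (0:ℝ) δ)), ∀ᵐ y ∂(volume.restrict (Ioo (0:ℝ) δ)),
      ∀ l, K₀ l x y ∈ {T | ∃ (l : Λ) (x y : ℝ), x ∈ Ioo 0 δ ∧ y ∈ Ioo 0 δ ∧ T = K₀ l x y} := by
    filter_upwards [hmem] with x hx
    filter_upwards [hmem] with y hy
    exact fun l => ⟨l, x, y, hx, hy, rfl⟩
  simpa [hδ.le] using isRBoundedWith_of_integral_kernel hq' hM hRB K₀ hK₀ K hK

/-- Integration of an R-bounded fiber family over the finite normal interval `(0,δ)`.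
Identifying `L_q(Ω)`, `Ω = ℝ^{N-1} × (0,δ)`, with the vector-valued space
`L_q((0,δ); E)` where `E = L_q(ℝ^{N-1})`, suppose the fiber operators
`K₀(λ; x_N, y_N) ∈ L(E)` form an R-bounded family with R-bound `M`, and suppose
`K(λ) ∈ L(L_q((0,δ); E))` satisfies
`(K(λ)h)(x_N) = ∫_0^δ K₀(λ; x_N, y_N)(h(y_N)) dy_N` a.e.
Then `{K(λ)}` is R-bounded with R-bound at most `C_q · δ · M`, with `C_q` depending
only on `q`. -/
theorem isRBounded_of_fiberwise_kernel (q : ℝ≥0∞) [Fact (1 ≤ q)] (hq : 1 < q) (hq' : q ≠ ⊤) :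
    ∃ Cq : ℝ, 0 < Cq ∧
      ∀ (δ : ℝ), 0 < δ →
      ∀ (E : Type) [NormedAddCommGroup E] [NormedSpace ℝ E] [CompleteSpace E]
        (Λ : Type) (K₀ : Λ → ℝ → ℝ → (E →L[ℝ] E)) (M : ℝ), 0 ≤ M →
        IsRBoundedWith {T | ∃ (l : Λ) (x y : ℝ), x ∈ Set.Ioo 0 δ ∧ y ∈ Set.Ioo 0 δ ∧
            T = K₀ l x y} q.toReal M →
        ∀ K : Λ → (Lp E q (volume.restrict (Set.Ioo (0:ℝ) δ)) →L[ℝ]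
                    Lp E q (volume.restrict (Set.Ioo (0:ℝ) δ))),
          (∀ (l : Λ) (h : Lp E q (volume.restrict (Set.Ioo (0:ℝ) δ))),
            ∀ᵐ x ∂(volume.restrict (Set.Ioo (0:ℝ) δ)),
              (K l h) x = ∫ y in Set.Ioo (0:ℝ) δ, K₀ l x y (h y)) →
          IsRBoundedWith {T | ∃ l : Λ, T = K l} q.toReal (Cq * δ * M) :=
  isRBounded_of_fiberwise_kernel_general q hq'
end

section
/- Let 0 < ε < π/2 and μ > 0, and for λ ∈ Σ_{ε,0} and A > 0 set B = √(μ^{-1}λ + A²) with Re B > 0 and M(x) = (e^{-Bx} − e^{-Ax})/(B − A) for x > 0 (interpreted as −x e^{-Ax} when B = A). Then there exist constants C, c > 0 depending only on ε, μ such that |B·M(x)| ≤ C e^{-cAx} for all x > 0, λ ∈ Σ_{ε,0}, A > 0. -/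
/-!
Put `w = μ⁻¹λ + A²`. The sector condition says `Re λ ≥ -cos ε · |λ|`; this survives adding
`A² > 0` and forces `|w| ≥ sin ε · A²`, so `Re B = √((|w| + Re w)/2) ≥ c A` with `c` depending
only on `ε`. On the half-plane `Re z ≥ c A` the derivative of `z ↦ e^{-zx}` has modulus at most
`x e^{-cAx}`, so the mean value theorem gives `|M(x)| ≤ x e^{-cAx}`, which settles `|B| ≤ 2A`
via `t e^{-t} ≤ 2 e^{-t/2}`. If `|B| > 2A` then `|B| ≤ 2|B - A|`, and
`|B - A| |M(x)| ≤ |e^{-Bx}| + |e^{-Ax}| ≤ 2 e^{-cAx}`.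
-/

open Complex

lemma Real.mul_exp_neg_le_two_mul_exp_neg_half (t : ℝ) :
    t * Real.exp (-t) ≤ 2 * Real.exp (-(t / 2)) := by
  have ht : t ≤ 2 * Real.exp (t / 2) := by
    linarith [Real.add_one_le_exp (t / 2), Real.exp_pos (t / 2)]
  calc t * Real.exp (-t) ≤ 2 * Real.exp (t / 2) * Real.exp (-t) := by gcongr
    _ = 2 * Real.exp (-(t / 2)) := by rw [mul_assoc, ← Real.exp_add]; ring_nf

namespace Complex

lemma neg_cos_mul_norm_le_re_of_abs_arg_le_s19 {z : ℂ} {ε : ℝ} (hε : 0 ≤ ε)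
    (hz : |z.arg| ≤ Real.pi - ε) : -(Real.cos ε * ‖z‖) ≤ z.re := by
  rcases eq_or_ne z 0 with rfl | hz0
  · simp
  have hcos : -Real.cos ε ≤ Real.cos z.arg := by
    rw [← Real.cos_abs z.arg, ← Real.cos_pi_sub]
    exact Real.cos_le_cos_of_nonneg_of_le_pi (abs_nonneg _) (by linarith) hz
  rw [cos_arg hz0, le_div_iff₀ (norm_pos_iff.2 hz0)] at hcos
  linarith

variable {k t : ℝ} {z : ℂ}

lemma neg_mul_norm_add_ofReal_le_re (hk : |k| ≤ 1) (ht : 0 ≤ t)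
    (hz : -(k * ‖z‖) ≤ z.re) : -(k * ‖z + t‖) ≤ (z + t).re := by
  have htri : ‖z‖ ≤ ‖z + t‖ + t := by
    simpa [abs_of_nonneg ht] using norm_le_norm_add_norm_sub' z (z + t)
  have htri' : ‖z + t‖ ≤ ‖z‖ + t := by
    simpa [abs_of_nonneg ht] using norm_add_le z t
  rw [add_re, ofReal_re]
  rcases abs_le.1 hk with ⟨hk1, hk2⟩
  rcases le_total 0 k with hk0 | hk0 <;> nlinarith

lemma one_sub_sq_mul_sq_le_norm_add_ofReal_sq (ht : 0 ≤ t) (hz : -(k * ‖z‖) ≤ z.re) :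
    (1 - k ^ 2) * t ^ 2 ≤ ‖z + t‖ ^ 2 := by
  have hsq : ‖z + t‖ ^ 2 = ‖z‖ ^ 2 + 2 * t * z.re + t ^ 2 := by
    rw [Complex.sq_norm, Complex.sq_norm, normSq_apply, normSq_apply, add_re, add_im, ofReal_re,
      ofReal_im, add_zero]
    ring
  nlinarith [sq_nonneg (‖z‖ - k * t), mul_le_mul_of_nonneg_left hz (by positivity : 0 ≤ 2 * t)]

lemma sqrt_le_re_cpow_half {w : ℂ} (hw : -(k * ‖w‖) ≤ w.re) :
    √((1 - k) / 2 * ‖w‖) ≤ (w ^ (1 / 2 : ℂ)).re := by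
  rw [one_div, cpow_inv_two_re]
  gcongr
  linarith

section DividedDifference

variable {a b : ℂ} {r x : ℝ}

lemma norm_exp_neg_mul_le (hx : 0 ≤ x) (hz : r ≤ z.re) :
    ‖exp (-z * x)‖ ≤ Real.exp (-(r * x)) := by
  rw [norm_exp, neg_mul, neg_re, re_mul_ofReal]
  gcongr

lemma norm_exp_sub_exp_le (hx : 0 ≤ x) (ha : r ≤ a.re) (hb : r ≤ b.re) :
    ‖exp (-b * x) - exp (-a * x)‖ ≤ x * Real.exp (-(r * x)) * ‖b - a‖ := by
  refine (convex_halfSpace_re_ge r).norm_image_sub_le_of_norm_hasDerivWithin_le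
    (f := fun z : ℂ => exp (-z * x)) (f' := fun z => -x * exp (-z * x))
    (fun z _ => ?_) (fun z hz => ?_) ha hb
  · have := ((hasDerivAt_id z).neg.mul_const (x : ℂ)).cexp
    simpa [mul_comm] using this.hasDerivWithinAt
  · rw [norm_mul, norm_neg, norm_real, Real.norm_of_nonneg hx]
    gcongr
    exact norm_exp_neg_mul_le hx hz

/-- The paper's `M(x)`: the divided difference of `z ↦ exp (-z x)` at `a` and `b`. -/
noncomputable def expNegDivDiff (a b : ℂ) (x : ℝ) : ℂ :=
  if b = a then -(x : ℂ) * exp (-a * x) else (exp (-b * x) - exp (-a * x)) / (b - a)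

lemma norm_expNegDivDiff_le (hx : 0 ≤ x) (ha : r ≤ a.re) (hb : r ≤ b.re) :
    ‖expNegDivDiff a b x‖ ≤ x * Real.exp (-(r * x)) := by
  unfold expNegDivDiff
  split_ifs with hba
  · rw [norm_mul, norm_neg, norm_real, Real.norm_of_nonneg hx]
    gcongr
    exact norm_exp_neg_mul_le hx ha
  · rw [norm_div, div_le_iff₀ (norm_pos_iff.2 (sub_ne_zero.2 hba))]
    exact norm_exp_sub_exp_le hx ha hb

lemma norm_sub_mul_norm_expNegDivDiff_le (hx : 0 ≤ x) (ha : r ≤ a.re) (hb : r ≤ b.re) :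
    ‖b - a‖ * ‖expNegDivDiff a b x‖ ≤ 2 * Real.exp (-(r * x)) := by
  unfold expNegDivDiff
  split_ifs with hba
  · rw [hba, sub_self, norm_zero, zero_mul]
    positivity
  · rw [norm_div, mul_div_cancel₀ _ (norm_ne_zero_iff.2 (sub_ne_zero.2 hba)), two_mul]
    exact (norm_sub_le _ _).trans
      (add_le_add (norm_exp_neg_mul_le hx hb) (norm_exp_neg_mul_le hx ha))

lemma norm_mul_expNegDivDiff_le {A c : ℝ} (hA : 0 < A) (hc : 0 < c) (hc' : c ≤ 1) (hx : 0 ≤ x)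
    (hb : c * A ≤ b.re) :
    ‖b * expNegDivDiff A b x‖ ≤ 4 / c * Real.exp (-(c / 2 * A * x)) := by
  have hA' : c * A ≤ (A : ℂ).re := by rw [ofReal_re]; nlinarith
  rw [norm_mul]
  rcases le_or_gt ‖b‖ (2 * A) with hsmall | hlarge
  · calc ‖b‖ * ‖expNegDivDiff A b x‖ ≤ 2 * A * (x * Real.exp (-(c * A * x))) := by
          gcongr; exact norm_expNegDivDiff_le hx hA' hb
      _ = 2 / c * ((c * A * x) * Real.exp (-(c * A * x))) := by field_simp
      _ ≤ 2 / c * (2 * Real.exp (-(c * A * x / 2))) :=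
          mul_le_mul_of_nonneg_left (Real.mul_exp_neg_le_two_mul_exp_neg_half _) (by positivity)
      _ = 4 / c * Real.exp (-(c / 2 * A * x)) := by ring_nf
  · have hba : ‖b‖ ≤ 2 * ‖b - A‖ := by
      have := norm_sub_norm_le b A
      rw [norm_real, Real.norm_of_nonneg hA.le] at this
      linarith
    calc ‖b‖ * ‖expNegDivDiff A b x‖ ≤ 2 * (‖b - A‖ * ‖expNegDivDiff A b x‖) := by
          nlinarith [norm_nonneg (expNegDivDiff A b x)]
      _ ≤ 2 * (2 * Real.exp (-(c * A * x))) :=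
          mul_le_mul_of_nonneg_left (norm_sub_mul_norm_expNegDivDiff_le hx hA' hb) two_pos.le
      _ ≤ 4 / c * Real.exp (-(c / 2 * A * x)) := by
          rw [← mul_assoc]
          refine mul_le_mul (by rw [le_div_iff₀ hc]; linarith) (Real.exp_le_exp.2 ?_)
            (by positivity) (by positivity)
          have : 0 ≤ c * A * x := by positivity
          linarith

end DividedDifference

lemma mul_le_re_cpow_half_add_sq_of_abs_arg_le {ε A : ℝ} (hε : 0 < ε) (hε' : ε < Real.pi)
    (hz : |z.arg| ≤ Real.pi - ε) (hA : 0 ≤ A) :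
    √((1 - Real.cos ε) / 2 * Real.sin ε) * A ≤ ((z + (A : ℂ) ^ 2) ^ (1 / 2 : ℂ)).re := by
  have hsin : 0 < Real.sin ε := Real.sin_pos_of_pos_of_lt_pi hε hε'
  have hk := Real.abs_cos_le_one ε
  have hsector := neg_cos_mul_norm_le_re_of_abs_arg_le_s19 hε.le hz
  have hw : Real.sin ε * A ^ 2 ≤ ‖z + (A : ℂ) ^ 2‖ := by
    have := one_sub_sq_mul_sq_le_norm_add_ofReal_sq (sq_nonneg A) hsector
    rw [← Real.sin_sq] at this
    push_cast at this
    exact le_of_pow_le_pow_left₀ two_ne_zero (norm_nonneg _) (by rw [mul_pow]; linarith)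
  calc √((1 - Real.cos ε) / 2 * Real.sin ε) * A
      = √((1 - Real.cos ε) / 2 * (Real.sin ε * A ^ 2)) := by
        rw [← mul_assoc, Real.sqrt_mul' _ (sq_nonneg A), Real.sqrt_sq hA]
    _ ≤ √((1 - Real.cos ε) / 2 * ‖z + (A : ℂ) ^ 2‖) := by
        gcongr; linarith [abs_le.1 hk]
    _ ≤ ((z + (A : ℂ) ^ 2) ^ (1 / 2 : ℂ)).re := by
        exact_mod_cast sqrt_le_re_cpow_half (neg_mul_norm_add_ofReal_le_re hk (sq_nonneg A) hsector)

end Complex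

/-- Let `0 < ε < π/2`, `μ > 0`.  For `λ ∈ Σ_{ε,0}` and `A > 0` set
`B = (μ⁻¹λ + A²)^{1/2}` with `Re B > 0` and `M(x) = (e^{-Bx} − e^{-Ax})/(B − A)`
(interpreted as `−x e^{-Ax}` when `B = A`).  Then there are `C, c > 0` depending only on
`ε, μ` with `|B·M(x)| ≤ C e^{-cAx}` for all `x > 0`. -/
theorem BM_decay_estimate (ε μ : ℝ) (hε : 0 < ε) (hε' : ε < Real.pi / 2) (hμ : 0 < μ) :
    ∃ C c : ℝ, 0 < C ∧ 0 < c ∧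
      ∀ (l : ℂ) (A x : ℝ), l ≠ 0 → |l.arg| ≤ Real.pi - ε → 0 < A → 0 < x →
        ∀ B M : ℂ, B = ((μ : ℂ)⁻¹ * l + (A : ℂ) ^ 2) ^ ((1 : ℂ) / 2) →
          M = (if B = (A : ℂ) then -(x : ℂ) * Complex.exp (-(A : ℂ) * (x : ℂ))
               else (Complex.exp (-B * (x : ℂ)) - Complex.exp (-(A : ℂ) * (x : ℂ))) / (B - (A : ℂ))) →
          ‖B * M‖ ≤ C * Real.exp (-(c * A * x)) := by
  have hεπ : ε < Real.pi := by linarith [Real.pi_pos]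
  have hsin : 0 < Real.sin ε := Real.sin_pos_of_pos_of_lt_pi hε hεπ
  have hcos : Real.cos ε < 1 := by nlinarith [Real.sin_sq_add_cos_sq ε, Real.cos_le_one ε]
  set c := √((1 - Real.cos ε) / 2 * Real.sin ε)
  have hc : 0 < c := Real.sqrt_pos.2 (by nlinarith)
  have hc' : c ≤ 1 := Real.sqrt_le_one.2 (by nlinarith [Real.sin_le_one ε, Real.neg_one_le_cos ε])
  refine ⟨4 / c, c / 2, by positivity, by positivity, ?_⟩
  rintro l A x - harg hA hx B M rfl rfl
  have harg' : |((μ⁻¹ : ℝ) * l).arg| ≤ Real.pi - ε := by rwa [arg_real_mul l (inv_pos.2 hμ)]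
  have hre := mul_le_re_cpow_half_add_sq_of_abs_arg_le hε hεπ harg' hA.le
  exact norm_mul_expNegDivDiff_le hA hc hc' hx.le (by exact_mod_cast hre)
end
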